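/- If Y and Z are linear subspaces of the finite-dimensional real vector space X, then ℰ(X/(Y+Z)) = ℰ(X/Y) ∩ ℰ(X/Z). -/

import Mathlib

open Filter Topology Set MeasureTheory Bornology BoundedContinuousFunction

noncomputable section

section ConeDefs
variable {X : Type*} [SeminormedAddCommGroup X] [Module ℝ X]

/-- A cone: a set stable under multiplication by positive scalars. -/
def IsCone (D : Set X) : Prop := ∀ x ∈ D, ∀ r : ℝ, 0 < r → r • x ∈ D

/-- A truncated cone: the intersection of a cone with the complement of a bounded set. -/
def IsTruncCone (C : Set X) : Prop :=
  ∃ D B : Set X, IsCone D ∧ Bornology.IsBounded B ∧ C = D ∩ Bᶜ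

/-- The half-line through `a` is eventually in `C`. -/
def EvIn (a : X) (C : Set X) : Prop :=
  ∃ s : ℝ, 0 < s ∧ ∀ r : ℝ, 1 ≤ r → r • (s • a) ∈ C

/-- The filter of truncated-cone neighborhoods of the direction of `a`. -/
def coneFilter (a : X) : Filter X :=
  Filter.generate {C | IsOpen C ∧ IsTruncCone C ∧ EvIn a C}

/-- The half-line `α` is eventually in `C`. -/
def RayEvIn (α : Module.Ray ℝ X) (C : Set X) : Prop :=
  ∃ (a : X) (ha : a ≠ 0), rayOfNeZero ℝ a ha = α ∧ ∀ r : ℝ, 1 ≤ r → r • a ∈ C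

/-- The filter of truncated-cone neighborhoods of the half-line `α`. -/
def rayConeFilter (α : Module.Ray ℝ X) : Filter X :=
  Filter.generate {C | IsOpen C ∧ IsTruncCone C ∧ RayEvIn α C}

end ConeDefs

instance instRayVectorTop {X : Type*} [SeminormedAddCommGroup X] [Module ℝ X] :
    TopologicalSpace (RayVector ℝ X) :=
  inferInstanceAs (TopologicalSpace {v : X // v ≠ 0})

/-- The sphere at infinity with the quotient topology from `X ∖ {0}`. -/
instance instSphereTop {X : Type*} [SeminormedAddCommGroup X] [Module ℝ X] :
    TopologicalSpace (Module.Ray ℝ X) :=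
  inferInstanceAs (TopologicalSpace (Quotient (RayVector.Setoid ℝ X)))

/-- The spherical compactification `X̄ = X ⊔ 𝕊_X`. -/
def SphComp (X : Type*) [SeminormedAddCommGroup X] [Module ℝ X] : Type _ :=
  X ⊕ Module.Ray ℝ X

instance instSphCompTop {X : Type*} [SeminormedAddCommGroup X] [Module ℝ X] :
    TopologicalSpace (SphComp X) :=
  TopologicalSpace.generateFrom
    ({s | ∃ O : Set X, IsOpen O ∧ s = Sum.inl '' O} ∪
     {s | ∃ C : Set X, IsOpen C ∧ IsTruncCone C ∧
          s = Sum.inl '' C ∪ Sum.inr '' {α : Module.Ray ℝ X | RayEvIn α C}})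


section Algebras
variable (X : Type*) [NormedAddCommGroup X] [NormedSpace ℝ X]

/-- Generators `u ∘ π_Z`, `u ∈ C(overline{X/Z})`, over all subspaces `Z ⊇ Y`. -/
def QGenSet (Y : Submodule ℝ X) : Set (X →ᵇ ℂ) :=
  {u | ∃ Z : Submodule ℝ X, Y ≤ Z ∧ ∃ v : C(SphComp (X ⧸ Z), ℂ),
      ∀ x : X, u x = v (Sum.inl (Submodule.Quotient.mk x))}

/-- The C*-algebra `ℰ(X/Y)`, realized inside the bounded continuous functions on `X`. -/
def EAlgY (Y : Submodule ℝ X) : StarSubalgebra ℂ (X →ᵇ ℂ) :=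
  (StarAlgebra.adjoin ℂ (QGenSet X Y)).topologicalClosure

/-- The C*-algebra `ℰ(X)` of elementary interactions. -/
abbrev EAlg : StarSubalgebra ℂ (X →ᵇ ℂ) := EAlgY X ⊥

end Algebras


section RayMap

variable {E F : Type*} [SeminormedAddCommGroup E] [Module ℝ E]
  [SeminormedAddCommGroup F] [Module ℝ F]

/-- The map on rays induced by an injective linear map. -/
def rayMapInj (ι : E →ₗ[ℝ] F) (hι : Function.Injective ι) :
    Module.Ray ℝ E → Module.Ray ℝ F :=
  Quotient.map (fun v => (⟨ι v.1, fun h => v.2 (hι (by rw [h, map_zero]))⟩ : RayVector ℝ F))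
    (fun v w h => by exact SameRay.map ι h)

lemma rayMapInj_rayOfNeZero (ι : E →ₗ[ℝ] F) (hι : Function.Injective ι) (a : E) (ha : a ≠ 0) :
    rayMapInj ι hι (rayOfNeZero ℝ a ha) =
      rayOfNeZero ℝ (ι a) (fun h => ha (hι (by rw [h, map_zero]))) := rfl

lemma rayEvIn_rayMapInj_iff (ι : E →ₗ[ℝ] F) (hι : Function.Injective ι)
    (α : Module.Ray ℝ E) (C : Set F) :
    RayEvIn (rayMapInj ι hι α) C ↔ RayEvIn α (ι ⁻¹' C) := by
  induction α using Module.Ray.ind with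
  | h a ha =>
    have hia : ι a ≠ 0 := fun h => ha (hι (by rw [h, map_zero]))
    constructor
    · rintro ⟨b, hb, hray, hmem⟩
      rw [rayMapInj_rayOfNeZero] at hray
      have hsame : SameRay ℝ b (ι a) := (ray_eq_iff hb hia).1 hray
      obtain ⟨r, hr, hrb⟩ := hsame.exists_pos_left hb hia
      refine ⟨r⁻¹ • a, smul_ne_zero (by positivity) ha, ?_, ?_⟩
      · refine (ray_eq_iff _ ha).2 ?_
        exact SameRay.sameRay_pos_smul_left a (by positivity)
      · intro s hs
        have : ι (s • (r⁻¹ • a)) = s • b := by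
          rw [_root_.map_smul, _root_.map_smul, ← hrb, smul_smul, smul_smul,
            mul_assoc, inv_mul_cancel₀ hr.ne', mul_one]
        simp only [Set.mem_preimage, this]
        exact hmem s hs
    · rintro ⟨a', ha', hray, hmem⟩
      refine ⟨ι a', fun h => ha' (hι (by rw [h, map_zero])), ?_, ?_⟩
      · rw [← hray, rayMapInj_rayOfNeZero]
      · intro s hs
        have := hmem s hs
        simpa [_root_.map_smul] using this

end RayMap

section SphMapCont

variable {E F : Type*} [SeminormedAddCommGroup E] [Module ℝ E]
  [SeminormedAddCommGroup F] [Module ℝ F]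

lemma preimage_sumMap_inl (ι : E →ₗ[ℝ] F) (hι : Function.Injective ι) (O : Set F) :
    Sum.map ι (rayMapInj ι hι) ⁻¹' (Sum.inl '' O) = Sum.inl '' (ι ⁻¹' O) := by
  ext x
  cases x with
  | inl e => simp
  | inr α => simp

lemma preimage_sumMap_cone (ι : E →ₗ[ℝ] F) (hι : Function.Injective ι) (C : Set F) :
    Sum.map ι (rayMapInj ι hι) ⁻¹'
        (Sum.inl '' C ∪ Sum.inr '' {α : Module.Ray ℝ F | RayEvIn α C}) =
      Sum.inl '' (ι ⁻¹' C) ∪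
        Sum.inr '' {α : Module.Ray ℝ E | RayEvIn α (ι ⁻¹' C)} := by
  ext x
  cases x with
  | inl e => simp
  | inr α => simp [rayEvIn_rayMapInj_iff ι hι]

/-- The map on spherical compactifications induced by an injective linear map. -/
def sphMapInj (ι : E →ₗ[ℝ] F) (hι : Function.Injective ι) : SphComp E → SphComp F :=
  Sum.map ι (rayMapInj ι hι)

lemma continuous_sphMap (ι : E →ₗ[ℝ] F) (hι : Function.Injective ι) (hc : Continuous ι)
    (hb : ∀ B : Set F, Bornology.IsBounded B → Bornology.IsBounded (ι ⁻¹' B)) :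
    Continuous (sphMapInj ι hι) := by
  apply continuous_generateFrom_iff.mpr
  rintro s hs
  rcases hs with ⟨O, hO, rfl⟩ | ⟨C, hCo, hCt, rfl⟩
  · show TopologicalSpace.GenerateOpen _ (Sum.map ι (rayMapInj ι hι) ⁻¹' _)
    rw [preimage_sumMap_inl ι hι O]
    exact TopologicalSpace.GenerateOpen.basic _ (Or.inl ⟨ι ⁻¹' O, hO.preimage hc, rfl⟩)
  · show TopologicalSpace.GenerateOpen _ (Sum.map ι (rayMapInj ι hι) ⁻¹' _)
    rw [preimage_sumMap_cone ι hι C]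
    refine TopologicalSpace.GenerateOpen.basic _ (Or.inr ⟨ι ⁻¹' C, hCo.preimage hc, ?_, rfl⟩)
    obtain ⟨D, B, hD, hB, rfl⟩ := hCt
    refine ⟨ι ⁻¹' D, ι ⁻¹' B, ?_, hb B hB, ?_⟩
    · intro x hx r hr
      simp only [Set.mem_preimage, _root_.map_smul]
      exact hD (ι x) hx r hr
    · rw [Set.preimage_inter, Set.preimage_compl]

end SphMapCont

section Main

variable {X : Type*} [NormedAddCommGroup X] [NormedSpace ℝ X] [FiniteDimensional ℝ X]

/-- Pulling back a generator along a linear map annihilating `W` gives a generator over `W`. -/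
lemma qGenSet_compContinuous {Y W : Submodule ℝ X} (p : X →ₗ[ℝ] X)
    (hker : W ≤ LinearMap.ker p) {u : X →ᵇ ℂ} (hu : u ∈ QGenSet X Y) :
    u.compContinuous ⟨p, p.continuous_of_finiteDimensional⟩ ∈ QGenSet X W := by
  obtain ⟨V, hYV, v, hv⟩ := hu
  set q : X →ₗ[ℝ] X ⧸ V := V.mkQ.comp p with hq
  set V' : Submodule ℝ X := LinearMap.ker q with hV'
  have hWV' : W ≤ V' := by
    intro w hw
    have : p w = 0 := hker hw
    simp [hV', LinearMap.mem_ker, hq, LinearMap.comp_apply, this]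
  set ι : (X ⧸ V') →ₗ[ℝ] X ⧸ V := V'.liftQ q le_rfl with hι
  have hinj : Function.Injective ι :=
    LinearMap.ker_eq_bot.mp (Submodule.ker_liftQ_eq_bot V' q le_rfl le_rfl)
  haveI hVc : IsClosed (V : Set X) := Submodule.closed_of_finiteDimensional V
  haveI hV'c : IsClosed (V' : Set X) := Submodule.closed_of_finiteDimensional V'
  have hcι : Continuous ι := ι.continuous_of_finiteDimensional
  have hbι : ∀ B : Set (X ⧸ V), Bornology.IsBounded B → Bornology.IsBounded (ι ⁻¹' B) := by
    obtain ⟨c, hc0, hc⟩ : ∃ c : ℝ, 0 < c ∧ ∀ m : X ⧸ V', ‖m‖ ≤ c * ‖ι m‖ := by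
      set e := LinearEquiv.ofInjective ι hinj with he
      have hcs : Continuous (e.symm.toLinearMap) :=
        LinearMap.continuous_of_finiteDimensional _
      obtain ⟨c, hc0, hc⟩ := SemilinearMapClass.bound_of_continuous e.symm.toLinearMap hcs
      refine ⟨c, hc0, fun m => ?_⟩
      have h1 := hc (e m)
      rw [LinearEquiv.coe_coe, LinearEquiv.symm_apply_apply] at h1
      have h2 : ‖e m‖ = ‖ι m‖ := by
        rw [Submodule.coe_norm, LinearEquiv.ofInjective_apply]
      rw [h2] at h1
      exact h1
    intro B hB
    obtain ⟨R0, hR0⟩ := hB.subset_closedBall 0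
    apply (Metric.isBounded_closedBall (x := (0 : X ⧸ V')) (r := c * R0)).subset
    intro m hm
    have h3 : ‖ι m‖ ≤ R0 := by
      have := hR0 hm
      simpa [Metric.mem_closedBall, dist_zero_right] using this
    have h4 := hc m
    simp only [Metric.mem_closedBall, dist_zero_right]
    calc ‖m‖ ≤ c * ‖ι m‖ := h4
      _ ≤ c * R0 := by nlinarith
  refine ⟨V', hWV', v.comp ⟨sphMapInj ι hinj, continuous_sphMap ι hinj hcι hbι⟩, fun x => ?_⟩
  have hmk : ι (Submodule.Quotient.mk x) = Submodule.Quotient.mk (p x) := by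
    rw [hι, Submodule.liftQ_apply, hq]
    rfl
  simp only [BoundedContinuousFunction.compContinuous_apply, ContinuousMap.coe_mk,
    ContinuousMap.comp_apply, hv]
  congr 1

end Main

section Main2

variable {X : Type*} [NormedAddCommGroup X] [NormedSpace ℝ X]

/-- Every element of `ℰ(X/W)` is `W`-invariant. -/
lemma eAlgY_invariant {W : Submodule ℝ X} {u : X →ᵇ ℂ} (hu : u ∈ EAlgY X W) :
    ∀ w ∈ W, ∀ x : X, u (x + w) = u x := by
  have hadj : ∀ v, v ∈ StarAlgebra.adjoin ℂ (QGenSet X W) →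
      ∀ w ∈ W, ∀ x : X, v (x + w) = v x := by
    intro v hv
    induction hv using StarAlgebra.adjoin_induction with
    | mem g hg =>
      intro w hw x
      obtain ⟨Z, hWZ, vc, hvc⟩ := hg
      rw [hvc, hvc]
      congr 2
      rw [Submodule.Quotient.eq]
      simpa using hWZ hw
    | algebraMap c =>
      intro w hw x
      simp
    | add a b ha hb iha ihb =>
      intro w hw x
      simp [iha w hw x, ihb w hw x]
    | mul a b ha hb iha ihb =>
      intro w hw x
      simp [iha w hw x, ihb w hw x]
    | star a ha iha =>
      intro w hw x
      simp [iha w hw x]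
  intro w hw x
  have hcl : u ∈ closure ((StarAlgebra.adjoin ℂ (QGenSet X W) : StarSubalgebra ℂ (X →ᵇ ℂ)) :
      Set (X →ᵇ ℂ)) := hu
  have hclosed : IsClosed {v : X →ᵇ ℂ | v (x + w) = v x} :=
    isClosed_eq (continuous_eval_const _)
      (continuous_eval_const _)
  exact closure_minimal (fun v hv => hadj v hv w hw x) hclosed hcl

/-- `ℰ(X/·)` is antitone. -/
lemma eAlgY_antitone {Y Y' : Submodule ℝ X} (h : Y ≤ Y') : EAlgY X Y' ≤ EAlgY X Y := by
  apply StarSubalgebra.topologicalClosure_mono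
  apply StarAlgebra.adjoin_le
  intro u hu
  obtain ⟨Z, hZ, v, hv⟩ := hu
  exact StarAlgebra.subset_adjoin ℂ _ ⟨Z, h.trans hZ, v, hv⟩

end Main2

/-- `ℰ(X/(Y+Z)) = ℰ(X/Y) ∩ ℰ(X/Z)`. -/
theorem statement14 {X : Type*} [NormedAddCommGroup X] [NormedSpace ℝ X]
    [FiniteDimensional ℝ X] (Y Z : Submodule ℝ X) :
    (EAlgY X (Y ⊔ Z) : Set (X →ᵇ ℂ)) =
      (EAlgY X Y : Set (X →ᵇ ℂ)) ∩ (EAlgY X Z : Set (X →ᵇ ℂ)) := by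
  apply Set.Subset.antisymm
  · intro u hu
    exact ⟨eAlgY_antitone le_sup_left hu, eAlgY_antitone le_sup_right hu⟩
  · rintro u ⟨huY, huZ⟩
    set W : Submodule ℝ X := Y ⊔ Z with hW
    -- u is W-invariant
    have hinv : ∀ w ∈ W, ∀ x : X, u (x + w) = u x := by
      intro w hw x
      obtain ⟨y, hy, z, hz, rfl⟩ := Submodule.mem_sup.mp hw
      have h1 := eAlgY_invariant huY y hy (x + z)
      have h2 := eAlgY_invariant huZ z hz x
      calc u (x + (y + z)) = u (x + z + y) := by rw [show x + (y + z) = x + z + y by abel]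
        _ = u (x + z) := h1
        _ = u x := h2
    -- complement and projection
    obtain ⟨W', hcompl⟩ := Submodule.exists_isCompl W
    set p : X →ₗ[ℝ] X := W'.subtype ∘ₗ (W'.projectionOnto W hcompl.symm) with hp
    have hker : W ≤ LinearMap.ker p := by
      intro w hw
      simp [hp, LinearMap.mem_ker, Submodule.projectionOnto_apply_of_mem_right hcompl.symm hw]
    have hfix : ∀ x : X, x - p x ∈ W := by
      intro x
      have hx := Submodule.projection_add_projection_eq_self hcompl.symm x
      have hpx : p x = ((W'.projectionOnto W hcompl.symm) x : X) := rfl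
      have h2 : x - ((W'.projectionOnto W hcompl.symm) x : X) =
          ((W.projectionOnto W' hcompl.symm.symm) x : X) := sub_eq_of_eq_add' hx.symm
      rw [hpx, h2]
      exact Submodule.coe_mem _
    set pc : C(X, X) := ⟨p, p.continuous_of_finiteDimensional⟩ with hpc
    -- R fixes u
    have hRu : u.compContinuous pc = u := by
      ext x
      show u (p x) = u x
      have := hinv (x - p x) (hfix x) (p x)
      rw [show p x + (x - p x) = x by abel] at this
      exact this.symm
    -- R maps EAlgY X Y into EAlgY X W
    have hgen : ∀ g, g ∈ StarAlgebra.adjoin ℂ (QGenSet X Y) →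
        g.compContinuous pc ∈ EAlgY X W := by
      intro g hg
      induction hg using StarAlgebra.adjoin_induction with
      | mem g hg =>
        apply (StarAlgebra.adjoin ℂ (QGenSet X W)).le_topologicalClosure
        exact StarAlgebra.subset_adjoin ℂ _ (qGenSet_compContinuous p hker hg)
      | algebraMap c =>
        have : (algebraMap ℂ (X →ᵇ ℂ) c).compContinuous pc = algebraMap ℂ (X →ᵇ ℂ) c := by
          ext x; simp
        rw [this]
        exact (EAlgY X W).algebraMap_mem c
      | add a b ha hb iha ihb =>
        have : (a + b).compContinuous pc = a.compContinuous pc + b.compContinuous pc := by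
          ext x; simp
        rw [this]
        exact add_mem iha ihb
      | mul a b ha hb iha ihb =>
        have : (a * b).compContinuous pc = a.compContinuous pc * b.compContinuous pc := by
          ext x; simp
        rw [this]
        exact mul_mem iha ihb
      | star a ha iha =>
        have : (star a).compContinuous pc = star (a.compContinuous pc) := by
          ext x; simp
        rw [this]
        exact star_mem iha
    have hmem : u.compContinuous pc ∈ EAlgY X W := by
      have hsub : ((StarAlgebra.adjoin ℂ (QGenSet X Y) : StarSubalgebra ℂ (X →ᵇ ℂ)) :
          Set (X →ᵇ ℂ)) ⊆ (fun f : X →ᵇ ℂ => f.compContinuous pc) ⁻¹'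
            (EAlgY X W : Set (X →ᵇ ℂ)) := fun g hg => hgen g hg
      have hclosed : IsClosed ((fun f : X →ᵇ ℂ => f.compContinuous pc) ⁻¹'
          (EAlgY X W : Set (X →ᵇ ℂ))) :=
        ((StarAlgebra.adjoin ℂ (QGenSet X W)).isClosed_topologicalClosure).preimage
          (BoundedContinuousFunction.continuous_compContinuous pc)
      exact closure_minimal hsub hclosed huY
    rw [← hRu]
    exact hmem
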